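/- Let s, p ≥ 1, let W_t ∈ ℝ^{s×2} and W_c ∈ ℝ^{s×p} with W_tᵀ W_c = 0, let Σ_t, Σ_b ∈ ℝ^{2×2} and Σ_c ∈ ℝ^{p×p} be symmetric positive definite, and let σ_v > 0. Define Σ_X = W_t Σ_t W_tᵀ + W_c Σ_c W_cᵀ + σ_v² I_s, for K ∈ ℝ^{2×s} define MSE(K) = Tr(Σ_t + Σ_b) − 2 Tr(K W_t Σ_t) + Tr(K Σ_X Kᵀ), and set K_cal = Σ_t W_tᵀ (W_t Σ_t W_tᵀ + σ_v² I_s)⁻¹. Then for every Δ ∈ ℝ^{2×s}, MSE(K_cal + Δ) − MSE(K_cal) = Tr(Δ Σ_X Δᵀ) ≥ 0. -/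

import Mathlib

/-!
`K_cal` solves the normal equation `K_cal Σ_X = Σ_t W_tᵀ`: the extra term `W_c Σ_c W_cᵀ` of `Σ_X`
is invisible to it, because `W_t Σ_t W_tᵀ + σ_v² I` acts as `σ_v² I` on the range of `W_c`
(as `W_tᵀ W_c = 0`) and `W_tᵀ` kills that range. The MSE is a quadratic function of `K` whose
gradient vanishes exactly on solutions of the normal equation, so its excess over the minimum is
the quadratic form `Tr(Δ Σ_X Δᵀ)`, nonnegative since `Σ_X` is positive definite.
-/

open Matrix

section

variable {m n R : Type*} [Fintype m] [Fintype n] [CommRing R]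

/-- The part of `K ↦ Tr(C) − 2 Tr(K M) + Tr(K S Kᵀ)` that depends on `K`. -/
def traceQuadratic (M : Matrix n m R) (S : Matrix n n R) (K : Matrix m n R) : R :=
  (K * S * Kᵀ).trace - 2 * (K * M).trace

theorem traceQuadratic_add_of_mul_eq_transpose {M : Matrix n m R} {S : Matrix n n R}
    (hS : S.IsSymm) {K₀ : Matrix m n R} (hK₀ : K₀ * S = Mᵀ) (Δ : Matrix m n R) :
    traceQuadratic M S (K₀ + Δ) = traceQuadratic M S K₀ + (Δ * S * Δᵀ).trace := by
  have h₁ : (K₀ * S * Δᵀ).trace = (Δ * M).trace := by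
    rw [hK₀, ← transpose_mul, trace_transpose]
  have h₂ : (Δ * S * K₀ᵀ).trace = (Δ * M).trace := by
    rw [Matrix.mul_assoc, ← hS.eq, ← transpose_mul, hK₀, transpose_transpose]
  simp only [traceQuadratic, transpose_add, Matrix.add_mul, Matrix.mul_add, trace_add, h₁, h₂]
  ring

theorem mul_mul_transpose_add_smul_one_mul {l : Type*} [Fintype l] [DecidableEq n]
    {W : Matrix n m R} {V : Matrix n l R} (hWV : Wᵀ * V = 0) (S : Matrix m m R) (σ : R) :
    (W * S * Wᵀ + σ • 1) * V = σ • V := by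
  simp [Matrix.add_mul, Matrix.mul_assoc, hWV]

end

theorem mul_inv_mul_add_mul_eq {m n l K : Type*} [Fintype n] [Fintype l] [DecidableEq n]
    [Field K]
    {A : Matrix n n K} (hA : IsUnit A.det) {σ : K} (hσ : σ ≠ 0) {W : Matrix n l K}
    (hAW : A * W = σ • W) {B : Matrix m n K} (hBW : B * W = 0) (C : Matrix l n K) :
    B * A⁻¹ * (A + W * C) = B := by
  have hAinvW : A⁻¹ * W = σ⁻¹ • W := by
    calc A⁻¹ * W = σ⁻¹ • (A⁻¹ * (σ • W)) := by
          rw [Matrix.mul_smul, smul_smul, inv_mul_cancel₀ hσ, one_smul]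
      _ = σ⁻¹ • W := by rw [← hAW, nonsing_inv_mul_cancel_left A W hA]
  rw [Matrix.mul_add, nonsing_inv_mul_cancel_right A B hA, ← Matrix.mul_assoc,
    Matrix.mul_assoc B, hAinvW, Matrix.mul_smul, hBW, smul_zero, Matrix.zero_mul, add_zero]

theorem posDef_mul_mul_transpose_add_smul_one {m n : Type*} [Fintype m] [Fintype n]
    [DecidableEq n] {W : Matrix n m ℝ} {S : Matrix m m ℝ} (hS : S.PosSemidef) {σ : ℝ}
    (hσ : 0 < σ) : (W * S * Wᵀ + σ • 1).PosDef :=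
  PosDef.posSemidef_add (by simpa using hS.mul_mul_conjTranspose_same W) (PosDef.one.smul hσ)

theorem stmt_6_general {s p : ℕ}
    (Wt : Matrix (Fin s) (Fin 2) ℝ) (Wc : Matrix (Fin s) (Fin p) ℝ)
    (horth : Wtᵀ * Wc = 0)
    (St Sb : Matrix (Fin 2) (Fin 2) ℝ) (Sc : Matrix (Fin p) (Fin p) ℝ)
    (hSt : St.PosDef) (hSc : Sc.PosDef)
    (σv : ℝ) (hσv : 0 < σv)
    (SX : Matrix (Fin s) (Fin s) ℝ)
    (hSX : SX = Wt * St * Wtᵀ + Wc * Sc * Wcᵀ + σv ^ 2 • (1 : Matrix (Fin s) (Fin s) ℝ))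
    (MSE : Matrix (Fin 2) (Fin s) ℝ → ℝ)
    (hMSE : ∀ K, MSE K = (St + Sb).trace - 2 * (K * Wt * St).trace + (K * SX * Kᵀ).trace)
    (Kcal : Matrix (Fin 2) (Fin s) ℝ)
    (hKcal : Kcal = St * Wtᵀ * (Wt * St * Wtᵀ + σv ^ 2 • (1 : Matrix (Fin s) (Fin s) ℝ))⁻¹) :
    ∀ Δ : Matrix (Fin 2) (Fin s) ℝ,
      MSE (Kcal + Δ) - MSE Kcal = (Δ * SX * Δᵀ).trace ∧
      0 ≤ (Δ * SX * Δᵀ).trace := by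
  intro Δ
  have hA := posDef_mul_mul_transpose_add_smul_one (W := Wt) hSt.posSemidef (pow_pos hσv 2)
  have hSXpd : SX.PosDef := by
    rw [hSX, add_right_comm]
    exact hA.add_posSemidef (by simpa using hSc.posSemidef.mul_mul_conjTranspose_same Wc)
  have hnormal : Kcal * SX = (Wt * St)ᵀ := by
    rw [transpose_mul, (isHermitian_iff_isSymm.mp hSt.isHermitian).eq, hKcal, hSX,
      add_right_comm, Matrix.mul_assoc Wc]
    exact mul_inv_mul_add_mul_eq (isUnit_iff_isUnit_det _ |>.mp hA.isUnit)
      (pow_pos hσv 2).ne' (mul_mul_transpose_add_smul_one_mul horth _ _)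
      (by rw [Matrix.mul_assoc, horth, Matrix.mul_zero]) _
  have hMSE' : ∀ K, MSE K = (St + Sb).trace + traceQuadratic (Wt * St) SX K := fun K => by
    rw [hMSE, traceQuadratic, Matrix.mul_assoc K]
    ring
  refine ⟨?_, by simpa using (hSXpd.posSemidef.mul_mul_conjTranspose_same Δ).trace_nonneg⟩
  rw [hMSE', hMSE', traceQuadratic_add_of_mul_eq_transpose
    (isHermitian_iff_isSymm.mp hSXpd.isHermitian) hnormal]
  ring

/-- Deterministic core of Theorem 2 of the paper: with
`ΣX = Wt Σt Wtᵀ + Wc Σc Wcᵀ + σv² I`, `MSE(K) = Tr(Σt + Σb) − 2 Tr(K Wt Σt) + Tr(K ΣX Kᵀ)`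
and `K_cal = Σt Wtᵀ (Wt Σt Wtᵀ + σv² I)⁻¹`, for every perturbation `Δ`,
`MSE(K_cal + Δ) − MSE(K_cal) = Tr(Δ ΣX Δᵀ) ≥ 0`. -/
theorem stmt_6 {s p : ℕ} (hs : 1 ≤ s) (hp : 1 ≤ p)
    (Wt : Matrix (Fin s) (Fin 2) ℝ) (Wc : Matrix (Fin s) (Fin p) ℝ)
    (horth : Wtᵀ * Wc = 0)
    (St Sb : Matrix (Fin 2) (Fin 2) ℝ) (Sc : Matrix (Fin p) (Fin p) ℝ)
    (hSt : St.PosDef) (hSb : Sb.PosDef) (hSc : Sc.PosDef)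
    (σv : ℝ) (hσv : 0 < σv)
    (SX : Matrix (Fin s) (Fin s) ℝ)
    (hSX : SX = Wt * St * Wtᵀ + Wc * Sc * Wcᵀ + σv ^ 2 • (1 : Matrix (Fin s) (Fin s) ℝ))
    (MSE : Matrix (Fin 2) (Fin s) ℝ → ℝ)
    (hMSE : ∀ K, MSE K = (St + Sb).trace - 2 * (K * Wt * St).trace + (K * SX * Kᵀ).trace)
    (Kcal : Matrix (Fin 2) (Fin s) ℝ)
    (hKcal : Kcal = St * Wtᵀ * (Wt * St * Wtᵀ + σv ^ 2 • (1 : Matrix (Fin s) (Fin s) ℝ))⁻¹) :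
    ∀ Δ : Matrix (Fin 2) (Fin s) ℝ,
      MSE (Kcal + Δ) - MSE Kcal = (Δ * SX * Δᵀ).trace ∧
      0 ≤ (Δ * SX * Δᵀ).trace :=
  stmt_6_general Wt Wc horth St Sb Sc hSt hSc σv hσv SX hSX MSE hMSE Kcal hKcal
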